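/- Let a : ℕ → ℝ be a bounded sequence whose Birkhoff averages B_n diverge, with cluster set [α_0, β_0]. Let γ ∈ [α_0, β_0] and suppose there exists ε > 0 such that limsup_{i→∞} n_{i+1}(γ, ε) / n_i(γ, ε) = ∞. Then the intersection ⋂_{k≥0} [α_k, β_k] contains a point lying outside the open interval (γ − ε/2, γ + ε/2); in particular ⋂_{k≥0} [α_k, β_k] cannot be the single point {γ}. -/

import Mathlib

/-!
Since `B (n + 1) - B n = (a n - B n) / (n + 1) → 0`, the Birkhoff averages eventually cannot jump
across the band `(γ - ε, γ + ε)`, so between two consecutive return times they stay on one side of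
it. As `n_{i+1} / n_i` is unbounded, `B` stays on one side, say above `γ + ε`, on intervals
`[p, q]` with `q / p` arbitrarily large. A Cesàro mean keeps such a run on `[M p, q]` up to an
`O(1 / M)` loss, since there the indices below `p` have weight at most `1 / M`; iterating, every
Hölder mean has `limsup ≥ γ + ε`. Cesàro averaging can only shrink `[liminf, limsup]`, so the
intervals `[α_k, β_k]` are nested and `⨅ β_k` lies in all of them, at distance `≥ ε` from `γ`.
-/

open Filter Topology

/-- Birkhoff averages: `birk a n = (1/n) * ∑_{i=0}^{n-1} a i` (junk value `0` at `n = 0`). -/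
noncomputable def birk (a : ℕ → ℝ) (n : ℕ) : ℝ := (∑ i ∈ Finset.range n, a i) / n

/-- Iterated Hölder means of a sequence `b` (indexed from 1):
`holderMeans b 0 n = b n` and `holderMeans b (k+1) n = (1/n) * ∑_{i=1}^n holderMeans b k i`. -/
noncomputable def holderMeans (b : ℕ → ℝ) : ℕ → ℕ → ℝ
  | 0, n => b n
  | k+1, n => (∑ i ∈ Finset.Icc 1 n, holderMeans b k i) / n

/-- Return times `n_i(γ, ε)`: the increasing enumeration (0-indexed) of
`{n ≥ 1 : γ - ε < B n < γ + ε}`. -/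
noncomputable def returnTimes (B : ℕ → ℝ) (γ ε : ℝ) (i : ℕ) : ℕ :=
  Nat.nth (fun n => 1 ≤ n ∧ γ - ε < B n ∧ B n < γ + ε) i

open Set

section BoundedSequences

variable {ι : Type*} {l : Filter ι} {u : ι → ℝ} {D : ℝ}

lemma isBoundedUnder_le_of_abs_le (hu : ∀ n, |u n| ≤ D) : IsBoundedUnder (· ≤ ·) l u :=
  isBoundedUnder_of ⟨D, fun n => (abs_le.1 (hu n)).2⟩

lemma isBoundedUnder_ge_of_abs_le (hu : ∀ n, |u n| ≤ D) : IsBoundedUnder (· ≥ ·) l u :=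
  isBoundedUnder_of ⟨-D, fun n => (abs_le.1 (hu n)).1⟩

lemma liminf_neg_of_abs_le [l.NeBot] (hu : ∀ n, |u n| ≤ D) : liminf (-u) l = -limsup u l :=
  (Antitone.map_limsup_of_continuousAt (fun _ _ => neg_le_neg) u continuous_neg.continuousAt
    (isBoundedUnder_le_of_abs_le hu) (isBoundedUnder_ge_of_abs_le hu).isCoboundedUnder_le).symm

lemma limsup_neg_of_abs_le [l.NeBot] (hu : ∀ n, |u n| ≤ D) : limsup (-u) l = -liminf u l :=
  (Antitone.map_liminf_of_continuousAt (fun _ _ => neg_le_neg) u continuous_neg.continuousAt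
    (isBoundedUnder_le_of_abs_le hu).isCoboundedUnder_ge (isBoundedUnder_ge_of_abs_le hu)).symm

end BoundedSequences

lemma abs_sum_div_card_le {ι : Type*} {s : Finset ι} {b : ι → ℝ} {D : ℝ}
    (hb : ∀ i ∈ s, |b i| ≤ D) (hD : 0 ≤ D) : |(∑ i ∈ s, b i) / s.card| ≤ D := by
  rcases s.eq_empty_or_nonempty with rfl | hs
  · simpa using hD
  rw [← Finset.expect_eq_sum_div_card]
  exact (Finset.abs_expect_le _ _).trans (Finset.expect_le hs hb)

lemma Antitone.ciInf_mem_iInter_Icc_of_monotone {α β : Type*} [ConditionallyCompleteLattice α]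
    [Preorder β] [IsDirectedOrder β] {f g : β → α} (hg : Antitone g) (hf : Monotone f)
    (h : f ≤ g) : (⨅ n, g n) ∈ ⋂ n, Icc (f n) (g n) := by
  have := Monotone.ciSup_mem_iInter_Icc_of_antitone (α := αᵒᵈ) hg.dual_right hf.dual_right h
  simpa [and_comm] using this

lemma frequently_lt_of_limsup_coe_eq_top {α : Type*} {f : Filter α} {u : α → ℝ}
    (h : limsup (fun i => (u i : EReal)) f = ⊤) (R : ℝ) : ∃ᶠ i in f, R < u i :=
  (frequently_lt_of_lt_limsup (by isBoundedDefault) (h ▸ EReal.coe_lt_top R)).mono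
    fun _ => EReal.coe_lt_coe_iff.1

def HasLongRuns (P : ℕ → Prop) : Prop :=
  ∀ (R : ℝ) (N : ℕ), ∃ p q : ℕ, N ≤ p ∧ R * p ≤ q ∧ ∀ n ∈ Icc p q, P n

lemma HasLongRuns.mono {P Q : ℕ → Prop} (h : HasLongRuns P) (hPQ : ∀ᶠ n in atTop, P n → Q n) :
    HasLongRuns Q := by
  obtain ⟨N₀, hN₀⟩ := eventually_atTop.1 hPQ
  intro R N
  obtain ⟨p, q, hp, hpq, hP⟩ := h R (max N N₀)
  exact ⟨p, q, le_of_max_le_left hp, hpq,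
    fun n hn => hN₀ n (le_of_max_le_right (hp.trans hn.1)) (hP n hn)⟩

lemma HasLongRuns.le_limsup {b : ℕ → ℝ} {c : ℝ} (h : HasLongRuns (c ≤ b ·))
    (hb : IsBoundedUnder (· ≤ ·) atTop b) : c ≤ limsup b atTop := by
  refine le_limsup_of_frequently_le (frequently_atTop.2 fun N => ?_) hb
  obtain ⟨p, q, hp, hpq, hrun⟩ := h 1 N
  exact ⟨p, hp, hrun p ⟨le_rfl, by exact_mod_cast (one_mul (p : ℝ)).symm.le.trans hpq⟩⟩

lemma hasLongRuns_not_of_frequently_lt_nth_ratio {P : ℕ → Prop}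
    (h : ∀ R : ℝ, ∃ᶠ i in atTop, R < (Nat.nth P (i + 1) : ℝ) / Nat.nth P i) :
    HasLongRuns (¬ P ·) := by
  intro R N
  -- The run is the gap between `nth P i` and `nth P (i + 1)`. A positive ratio rules out the
  -- junk value `nth P i = 0`, which is also what gives `i ≤ nth P i`.
  obtain ⟨i, hratio, hi⟩ := ((h (2 * (|R| + 1))).and_eventually (eventually_ge_atTop N)).exists
  set m := Nat.nth P i
  set m' := Nat.nth P (i + 1)
  have hm : m ≠ 0 := by
    rintro hm
    rw [hm, Nat.cast_zero, div_zero] at hratio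
    linarith [abs_nonneg R]
  have hm1 : (1 : ℝ) ≤ m := by exact_mod_cast Nat.one_le_iff_ne_zero.2 hm
  rw [lt_div_iff₀ (by linarith)] at hratio
  have hm' : 1 ≤ m' := by exact_mod_cast (show (1 : ℝ) ≤ m' by nlinarith [abs_nonneg R])
  refine ⟨m + 1, m' - 1, ?_, ?_, fun n hn hPn => ?_⟩
  · exact hi.trans <|
      (Nat.le_nth fun hf => Nat.lt_card_toFinset_of_nth_ne_zero hm hf).trans m.le_succ
  · push_cast [Nat.cast_sub hm']
    nlinarith [le_abs_self R, abs_nonneg R]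
  · have := Nat.le_nth_of_lt_nth_succ (show n < m' by have := hn.2; omega) hPn
    have := hn.1
    omega

lemma forall_le_or_forall_ge_of_abs_sub_lt {B : ℕ → ℝ} {lo hi : ℝ} {p q : ℕ} (hpq : p ≤ q)
    (hstep : ∀ n ∈ Ico p q, |B (n + 1) - B n| < hi - lo)
    (hout : ∀ n ∈ Icc p q, B n ∉ Ioo lo hi) :
    (∀ n ∈ Icc p q, B n ≤ lo) ∨ (∀ n ∈ Icc p q, hi ≤ B n) := by
  induction q, hpq using Nat.le_induction with
  | base =>
    have hIcc : ∀ n ∈ Icc p p, n = p := fun n hn => le_antisymm hn.2 hn.1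
    by_cases hp : B p ≤ lo
    · exact .inl fun n hn => hIcc n hn ▸ hp
    · exact .inr fun n hn => hIcc n hn ▸
        le_of_not_gt fun hlt => hout p ⟨le_rfl, le_rfl⟩ ⟨not_le.1 hp, hlt⟩
  | succ q hpq ih =>
    have hq : q ∈ Icc p q := ⟨hpq, le_rfl⟩
    have hq' := hout (q + 1) ⟨by omega, le_rfl⟩
    have hs := abs_lt.1 (hstep q ⟨hpq, q.lt_succ_self⟩)
    have hext : ∀ {Q : ℝ → Prop}, (∀ n ∈ Icc p q, Q (B n)) → Q (B (q + 1)) →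
        ∀ n ∈ Icc p (q + 1), Q (B n) := fun hQ hQ' n hn => by
      rcases (Nat.lt_or_ge n (q + 1)) with h | h
      · exact hQ n ⟨hn.1, by omega⟩
      · exact (show n = q + 1 by have := hn.2; omega) ▸ hQ'
    rcases ih (fun n hn => hstep n ⟨hn.1, hn.2.trans q.lt_succ_self⟩)
      (fun n hn => hout n ⟨hn.1, hn.2.trans q.le_succ⟩) with hle | hge
    · exact .inl <| hext (Q := (· ≤ lo)) hle <|
        le_of_not_gt fun hlt => hq' ⟨hlt, by linarith [hle q hq]⟩
    · exact .inr <| hext (Q := (hi ≤ ·)) hge <|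
        le_of_not_gt fun hlt => hq' ⟨by linarith [hge q hq], hlt⟩

lemma HasLongRuns.above_or_below {B : ℕ → ℝ} {lo hi : ℝ} (h : HasLongRuns (B · ∉ Ioo lo hi))
    (hlohi : lo < hi) (hB : Tendsto (fun n => B (n + 1) - B n) atTop (𝓝 0)) :
    HasLongRuns (hi ≤ B ·) ∨ HasLongRuns (B · ≤ lo) := by
  obtain ⟨N₀, hN₀⟩ := eventually_atTop.1 <|
    (by simpa using hB.abs : Tendsto (fun n => |B (n + 1) - B n|) atTop (𝓝 0)).eventually
      (gt_mem_nhds (sub_pos.2 hlohi))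
  refine or_iff_not_imp_left.2 fun hup R N => ?_
  simp only [HasLongRuns, not_forall, not_exists, not_and, not_le] at hup
  obtain ⟨R₁, N₁, hR₁⟩ := hup
  obtain ⟨p, q, hp, hpq, hout⟩ := h (max (max R R₁) 1) (max (max N N₁) N₀)
  have hmono : ∀ R' ≤ max (max R R₁) 1, R' * p ≤ q := fun R' hR' =>
    (mul_le_mul_of_nonneg_right hR' p.cast_nonneg).trans hpq
  have hpq' : p ≤ q := by exact_mod_cast (one_mul (p : ℝ)) ▸ hmono 1 (le_max_right _ _)
  rcases forall_le_or_forall_ge_of_abs_sub_lt hpq'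
    (fun n hn => hN₀ n (by have := hn.1; omega)) hout with hle | hge
  · exact ⟨p, q, by omega, hmono R (by simp), hle⟩
  · obtain ⟨n, hn, hlt⟩ := hR₁ p q (by omega) (hmono R₁ (by simp))
    exact absurd (hge n hn) (not_le.2 hlt)

noncomputable def cesaroMean (b : ℕ → ℝ) (n : ℕ) : ℝ := (∑ i ∈ Finset.Icc 1 n, b i) / n

section Cesaro

variable {b : ℕ → ℝ} {D : ℝ}

lemma cesaroMean_neg (b : ℕ → ℝ) : cesaroMean (-b) = -cesaroMean b := by
  ext n
  simp [cesaroMean, neg_div]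

lemma abs_cesaroMean_le (hb : ∀ n, |b n| ≤ D) (n : ℕ) : |cesaroMean b n| ≤ D := by
  simpa [cesaroMean] using abs_sum_div_card_le (s := Finset.Icc 1 n) (fun i _ => hb i)
    ((abs_nonneg _).trans (hb 0))

lemma sub_le_cesaroMean {c : ℝ} {p n : ℕ} (hb : ∀ i, |b i| ≤ D) (hp : 0 < p) (hpn : p ≤ n)
    (h : ∀ i ∈ Icc p n, c ≤ b i) : c - p * (D + |c|) / n ≤ cesaroMean b n := by
  have hn : (0 : ℝ) < n := by exact_mod_cast hp.trans_le hpn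
  have hsplit : ∑ i ∈ Finset.Icc 1 n, (b i - c) =
      ∑ i ∈ Finset.Ico 1 p, (b i - c) + ∑ i ∈ Finset.Ico p (n + 1), (b i - c) := by
    rw [← Finset.Ico_add_one_right_eq_Icc, Finset.sum_Ico_consecutive _ hp (by omega)]
  have hhead : -(p * (D + |c|)) ≤ ∑ i ∈ Finset.Ico 1 p, (b i - c) :=
    calc -(p * (D + |c|)) ≤ -((Finset.Ico 1 p).card * (D + |c|)) := by
          have : 0 ≤ D + |c| := add_nonneg ((abs_nonneg _).trans (hb 0)) (abs_nonneg c)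
          have : ((Finset.Ico 1 p).card : ℝ) ≤ p := by simp
          nlinarith
      _ = ∑ _i ∈ Finset.Ico 1 p, -(D + |c|) := by simp; ring
      _ ≤ ∑ i ∈ Finset.Ico 1 p, (b i - c) := Finset.sum_le_sum fun i _ => by
          linarith [abs_le.1 (hb i), le_abs_self c]
  have htail : 0 ≤ ∑ i ∈ Finset.Ico p (n + 1), (b i - c) :=
    Finset.sum_nonneg fun i hi => sub_nonneg.2 <| h i (by simp at hi; exact ⟨hi.1, by omega⟩)
  have hmean : ∑ i ∈ Finset.Icc 1 n, (b i - c) = n * cesaroMean b n - n * c := by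
    simp [Finset.sum_sub_distrib, cesaroMean, mul_div_cancel₀ _ hn.ne']
  have : c - cesaroMean b n ≤ p * (D + |c|) / n := by
    rw [le_div_iff₀ hn]
    linarith
  linarith

lemma liminf_le_liminf_cesaroMean (hb : ∀ n, |b n| ≤ D) :
    liminf b atTop ≤ liminf (cesaroMean b) atTop := by
  refine le_of_forall_lt_imp_le_of_dense fun c hc => ?_
  obtain ⟨N, hN⟩ :=
    eventually_atTop.1 (eventually_lt_of_lt_liminf hc (isBoundedUnder_ge_of_abs_le hb))
  have hlow : ∀ᶠ n in atTop, c - (N + 1 : ℕ) * (D + |c|) / n ≤ cesaroMean b n :=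
    (eventually_ge_atTop (N + 1)).mono fun n hn =>
      sub_le_cesaroMean hb N.succ_pos hn fun i hi => (hN i (N.le_succ.trans hi.1)).le
  have hlim : Tendsto (fun n : ℕ => c - (N + 1 : ℕ) * (D + |c|) / n) atTop (𝓝 c) := by
    simpa using (tendsto_const_nhds (x := c)).sub
      (tendsto_const_div_atTop_nhds_zero_nat ((N + 1 : ℕ) * (D + |c|)))
  calc c = liminf (fun n : ℕ => c - (N + 1 : ℕ) * (D + |c|) / n) atTop := hlim.liminf_eq.symm
    _ ≤ liminf (cesaroMean b) atTop := liminf_le_liminf hlow hlim.isBoundedUnder_ge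
        (isBoundedUnder_le_of_abs_le (abs_cesaroMean_le hb)).isCoboundedUnder_ge

lemma limsup_cesaroMean_le (hb : ∀ n, |b n| ≤ D) :
    limsup (cesaroMean b) atTop ≤ limsup b atTop := by
  have hb' : ∀ n, |(-b) n| ≤ D := by simpa using hb
  have h := liminf_le_liminf_cesaroMean hb'
  rw [cesaroMean_neg, liminf_neg_of_abs_le hb, liminf_neg_of_abs_le (abs_cesaroMean_le hb)] at h
  linarith

lemma HasLongRuns.cesaroMean {c δ : ℝ} (hb : ∀ n, |b n| ≤ D) (h : HasLongRuns (c ≤ b ·))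
    (hδ : 0 < δ) : HasLongRuns (c - δ ≤ cesaroMean b ·) := by
  -- Past `M p` the indices below `p` weigh at most `p (D + |c|) / (M p) < δ` in the mean.
  obtain ⟨M, hM⟩ := exists_nat_gt ((D + |c|) / δ)
  intro R N
  obtain ⟨p, q, hp, hpq, hrun⟩ := h (R * M) (N + 1)
  have hK : 0 ≤ D + |c| := add_nonneg ((abs_nonneg _).trans (hb 0)) (abs_nonneg c)
  have hM0 : 0 < M := by exact_mod_cast (div_nonneg hK hδ.le).trans_lt hM
  refine ⟨M * p, q, by nlinarith, by push_cast; linarith, fun n hn => ?_⟩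
  have hpn : p ≤ n := (Nat.le_mul_of_pos_left p hM0).trans hn.1
  refine le_trans ?_ <|
    sub_le_cesaroMean hb (by omega) hpn fun i hi => hrun i ⟨hi.1, hi.2.trans hn.2⟩
  have hMp : (M : ℝ) * p ≤ n := by exact_mod_cast hn.1
  have hn0 : (0 : ℝ) < n := by exact_mod_cast (show 0 < n by omega)
  rw [div_lt_iff₀ hδ] at hM
  have : p * (D + |c|) / n ≤ δ := by
    rw [div_le_iff₀ hn0]
    nlinarith
  linarith

end Cesaro

section Holder

variable {b : ℕ → ℝ} {D : ℝ}

lemma holderMeans_succ (b : ℕ → ℝ) (k : ℕ) :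
    holderMeans b (k + 1) = cesaroMean (holderMeans b k) := rfl

lemma holderMeans_neg (b : ℕ → ℝ) (k : ℕ) : holderMeans (-b) k = -holderMeans b k := by
  induction k with
  | zero => rfl
  | succ k ih => rw [holderMeans_succ, holderMeans_succ, ih, cesaroMean_neg]

lemma abs_holderMeans_le (hb : ∀ n, |b n| ≤ D) (k n : ℕ) : |holderMeans b k n| ≤ D := by
  induction k generalizing n with
  | zero => exact hb n
  | succ k ih => exact abs_cesaroMean_le ih n

lemma monotone_liminf_holderMeans (hb : ∀ n, |b n| ≤ D) :
    Monotone fun k => liminf (holderMeans b k) atTop :=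
  monotone_nat_of_le_succ fun k => liminf_le_liminf_cesaroMean (abs_holderMeans_le hb k)

lemma antitone_limsup_holderMeans (hb : ∀ n, |b n| ≤ D) :
    Antitone fun k => limsup (holderMeans b k) atTop :=
  antitone_nat_of_succ_le fun k => limsup_cesaroMean_le (abs_holderMeans_le hb k)

lemma liminf_holderMeans_le_limsup (hb : ∀ n, |b n| ≤ D) (k : ℕ) :
    liminf (holderMeans b k) atTop ≤ limsup (holderMeans b k) atTop :=
  liminf_le_limsup (isBoundedUnder_le_of_abs_le (abs_holderMeans_le hb k))
    (isBoundedUnder_ge_of_abs_le (abs_holderMeans_le hb k))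

lemma HasLongRuns.le_limsup_holderMeans {c : ℝ} (hb : ∀ n, |b n| ≤ D)
    (h : HasLongRuns (c ≤ b ·)) (k : ℕ) : c ≤ limsup (holderMeans b k) atTop := by
  have hruns : ∀ δ > 0, HasLongRuns (c - δ ≤ holderMeans b k ·) := by
    induction k with
    | zero =>
      intro δ hδ
      exact h.mono (.of_forall fun n hn => by simp only [holderMeans]; linarith)
    | succ k ih =>
      intro δ hδ
      simpa [holderMeans_succ, sub_sub, add_halves] using
        (ih (δ / 2) (half_pos hδ)).cesaroMean (abs_holderMeans_le hb k) (half_pos hδ)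
  exact le_of_forall_sub_le fun δ hδ =>
    (hruns δ hδ).le_limsup (isBoundedUnder_le_of_abs_le (abs_holderMeans_le hb k))

lemma HasLongRuns.liminf_holderMeans_le {c : ℝ} (hb : ∀ n, |b n| ≤ D)
    (h : HasLongRuns (b · ≤ c)) (k : ℕ) : liminf (holderMeans b k) atTop ≤ c := by
  have hneg : HasLongRuns (-c ≤ (-b) ·) := h.mono (.of_forall fun n hn => by simpa using hn)
  have := hneg.le_limsup_holderMeans (by simpa using hb) k
  rw [holderMeans_neg, limsup_neg_of_abs_le (abs_holderMeans_le hb k)] at this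
  linarith

end Holder

section Birkhoff

variable {a : ℕ → ℝ} {C : ℝ}

lemma abs_birk_le (ha : ∀ n, |a n| ≤ C) (n : ℕ) : |birk a n| ≤ C := by
  simpa [birk] using
    abs_sum_div_card_le (s := Finset.range n) (fun i _ => ha i) ((abs_nonneg _).trans (ha 0))

lemma birk_succ_sub (a : ℕ → ℝ) (n : ℕ) :
    birk a (n + 1) - birk a n = (a n - birk a n) / (n + 1) := by
  rcases n.eq_zero_or_pos with rfl | hn
  · simp [birk]
  · have hn' : (n : ℝ) ≠ 0 := by positivity
    simp only [birk, Finset.sum_range_succ]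
    push_cast
    field_simp
    ring

lemma tendsto_birk_succ_sub (ha : ∀ n, |a n| ≤ C) :
    Tendsto (fun n => birk a (n + 1) - birk a n) atTop (𝓝 0) := by
  simp_rw [birk_succ_sub, div_eq_inv_mul]
  refine Tendsto.zero_mul_isBoundedUnder_le
    (by simpa using tendsto_one_div_add_atTop_nhds_zero_nat (𝕜 := ℝ))
    (isBoundedUnder_of ⟨C + C, fun n => ?_⟩)
  simpa [Real.norm_eq_abs] using (abs_sub _ _).trans (add_le_add (ha n) (abs_birk_le ha n))

end Birkhoff

theorem inter_holder_intervals_not_singleton_general (a : ℕ → ℝ)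
    (hbdd : ∃ C : ℝ, ∀ n, |a n| ≤ C)
    (γ : ℝ)
    (ε : ℝ) (hε : 0 < ε)
    (hlim : limsup (fun i : ℕ => (((returnTimes (birk a) γ ε (i + 1) : ℝ) /
      (returnTimes (birk a) γ ε i : ℝ) : ℝ) : EReal)) atTop = ⊤) :
    (∃ x : ℝ,
      x ∈ (⋂ k : ℕ, Set.Icc (liminf (fun n : ℕ => holderMeans (birk a) k n) atTop)
        (limsup (fun n : ℕ => holderMeans (birk a) k n) atTop)) ∧
      x ∉ Set.Ioo (γ - ε / 2) (γ + ε / 2)) ∧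
    (⋂ k : ℕ, Set.Icc (liminf (fun n : ℕ => holderMeans (birk a) k n) atTop)
      (limsup (fun n : ℕ => holderMeans (birk a) k n) atTop)) ≠ {γ} := by
  obtain ⟨C, hC⟩ := hbdd
  have hB := abs_birk_le hC
  have hmono := monotone_liminf_holderMeans hB
  have hanti := antitone_limsup_holderMeans hB
  have hle := liminf_holderMeans_le_limsup hB
  have hruns : HasLongRuns (birk a · ∉ Ioo (γ - ε) (γ + ε)) :=
    (hasLongRuns_not_of_frequently_lt_nth_ratio (frequently_lt_of_limsup_coe_eq_top hlim)).mono
      ((eventually_ge_atTop 1).mono fun n hn hS hBn => hS ⟨hn, hBn⟩)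
  have hfar : ∃ x ∈ ⋂ k : ℕ, Icc (liminf (holderMeans (birk a) k) atTop)
      (limsup (holderMeans (birk a) k) atTop), x ∉ Ioo (γ - ε / 2) (γ + ε / 2) := by
    rcases hruns.above_or_below (by linarith) (tendsto_birk_succ_sub hC) with hup | hdown
    · refine ⟨_, hanti.ciInf_mem_iInter_Icc_of_monotone hmono hle, fun hx => ?_⟩
      linarith [hx.2, le_ciInf (hup.le_limsup_holderMeans hB)]
    · refine ⟨_, hmono.ciSup_mem_iInter_Icc_of_antitone hanti hle, fun hx => ?_⟩
      linarith [hx.1, ciSup_le (hdown.liminf_holderMeans_le hB)]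
  obtain ⟨x, hx, hxγ⟩ := hfar
  refine ⟨⟨x, hx, hxγ⟩, fun h => hxγ ?_⟩
  rw [h, mem_singleton_iff] at hx
  exact hx ▸ ⟨by linarith, by linarith⟩

/-- **Lemma 2.**  Let `a` be bounded with divergent Birkhoff averages `B_n`, with
cluster set `[α₀, β₀]`.  Let `γ ∈ [α₀, β₀]` and suppose there is `ε > 0` with
`limsup_i n_{i+1}(γ, ε)/n_i(γ, ε) = ∞`.  Then `⋂_k [α_k, β_k]` contains a point
outside the open interval `(γ - ε/2, γ + ε/2)`; in particular it is not the
singleton `{γ}`. -/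
theorem inter_holder_intervals_not_singleton (a : ℕ → ℝ)
    (hbdd : ∃ C : ℝ, ∀ n, |a n| ≤ C)
    (hdiv : ¬ ∃ L : ℝ, Tendsto (birk a) atTop (𝓝 L))
    (γ : ℝ) (hγ : γ ∈ Set.Icc (liminf (birk a) atTop) (limsup (birk a) atTop))
    (ε : ℝ) (hε : 0 < ε)
    (hlim : limsup (fun i : ℕ => (((returnTimes (birk a) γ ε (i + 1) : ℝ) /
      (returnTimes (birk a) γ ε i : ℝ) : ℝ) : EReal)) atTop = ⊤) :
    (∃ x : ℝ,
      x ∈ (⋂ k : ℕ, Set.Icc (liminf (fun n : ℕ => holderMeans (birk a) k n) atTop)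
        (limsup (fun n : ℕ => holderMeans (birk a) k n) atTop)) ∧
      x ∉ Set.Ioo (γ - ε / 2) (γ + ε / 2)) ∧
    (⋂ k : ℕ, Set.Icc (liminf (fun n : ℕ => holderMeans (birk a) k n) atTop)
      (limsup (fun n : ℕ => holderMeans (birk a) k n) atTop)) ≠ {γ} :=
  inter_holder_intervals_not_singleton_general a hbdd γ ε hε hlim
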